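/- arXiv:2605.01682 — 2 statements merged into one kernel-verified Lean document; each statement's English description precedes it below -/
import Mathlib

section
/- A positive integer n is a cyclic number (i.e., every group of order n is cyclic) if and only if gcd(n, φ(n)) = 1, where φ is Euler's totient function. -/
/-!
If `gcd(n, φ(n)) = 1` then `n` is squarefree, so a group `G` of order `n` is a Z-group: all its
Sylow subgroups are cyclic. Its commutator subgroup `G'` is then cyclic, and conjugation maps `G`
into `Aut(G') ≅ (ℤ/|G'|)ˣ`, a group of order `φ(|G'|) ∣ φ(n)`, which is coprime to `n`. Hence `G'`
is central, `G` is nilpotent, and a nilpotent Z-group is cyclic.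

Conversely, let a prime `p` divide both `n = p m` and `φ(n)`. If `p ∣ m`, then `ℤ/m × ℤ/p` is not
cyclic. Otherwise `p ∣ φ(m) = |Aut(ℤ/m)|`, so an automorphism of order `p` gives a nonabelian
semidirect product `ℤ/m ⋊ ℤ/p`.
-/

theorem Nat.squarefree_of_coprime_totient {n : ℕ} (h : n.Coprime n.totient) : Squarefree n := by
  rw [Nat.squarefree_iff_prime_squarefree]
  rintro p hp ⟨m, rfl⟩
  have hp_dvd_totient : p ∣ (p * p * m).totient := by
    rw [mul_assoc, Nat.totient_mul_of_prime_of_dvd hp (dvd_mul_right p m)]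
    exact dvd_mul_right _ _
  exact Nat.not_coprime_of_dvd_of_dvd hp.one_lt (dvd_mul_of_dvd_left (dvd_mul_right p p) m)
    hp_dvd_totient h

theorem MonoidHom.eq_one_of_coprime_card {G H : Type*} [Group G] [Group H] (f : G →* H)
    (h : (Nat.card G).Coprime (Nat.card H)) (g : G) : f g = 1 :=
  orderOf_eq_one_iff.mp <| Nat.eq_one_of_dvd_coprimes h
    ((orderOf_map_dvd f g).trans (orderOf_dvd_natCard g)) (orderOf_dvd_natCard (f g))

theorem Subgroup.le_center_of_coprime_totient {G : Type*} [Group G] (N : Subgroup G) [N.Normal]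
    [Finite N] [IsCyclic N] (h : (Nat.card G).Coprime (Nat.card N).totient) :
    N ≤ Subgroup.center G := by
  intro n hn
  rw [Subgroup.mem_center_iff]
  intro g
  have hconj : MulAut.conjNormal (H := N) g = 1 :=
    MulAut.conjNormal.eq_one_of_coprime_card (by rwa [IsCyclic.card_mulAut]) g
  have := congrArg (fun e : MulAut N => (e ⟨n, hn⟩ : G)) hconj
  simpa [MulAut.conjNormal_apply, mul_inv_eq_iff_eq_mul] using this

theorem isCyclic_of_coprime_card_totient {G : Type*} [Group G] [Finite G]
    (h : (Nat.card G).Coprime (Nat.card G).totient) : IsCyclic G := by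
  have : IsZGroup G := .of_squarefree (Nat.squarefree_of_coprime_totient h)
  have : IsCyclic (commutator G) := IsZGroup.isCyclic_commutator G
  have hcentral : commutator G ≤ Subgroup.center G :=
    (commutator G).le_center_of_coprime_totient <|
      h.coprime_dvd_right (Nat.totient_dvd_of_dvd (Subgroup.card_subgroup_dvd_card _))
  have : Group.IsNilpotent G :=
    Subgroup.isNilpotent_of_ker_le_center Abelianization.of (by rwa [Abelianization.ker_of])
  infer_instance

theorem SemidirectProduct.not_isCyclic_of_ne_one {N H : Type*} [Group N] [Group H]
    {φ : H →* MulAut N} (hφ : φ ≠ 1) : ¬IsCyclic (N ⋊[φ] H) := by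
  intro hcyc
  let _ := hcyc.commGroup
  refine hφ (MonoidHom.ext fun h => MulEquiv.ext fun n => ?_)
  simpa using congrArg left (mul_comm (inr h) (inl n : N ⋊[φ] H))

theorem exists_not_isCyclic_card_eq_mul_of_not_coprime {m k : ℕ} [NeZero m] [NeZero k]
    (h : ¬m.Coprime k) :
    ∃ (G : Type) (_ : Group G) (_ : Finite G), Nat.card G = m * k ∧ ¬IsCyclic G := by
  refine ⟨Multiplicative (ZMod m) × Multiplicative (ZMod k), inferInstance, inferInstance,
    by simp, fun hcyc => h ?_⟩
  simpa using (Group.isCyclic_prod_iff.mp hcyc).2.2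

theorem exists_not_isCyclic_card_eq_mul_of_dvd_totient {m p : ℕ} [NeZero m] (hp : p.Prime)
    (hpm : p ∣ m.totient) :
    ∃ (G : Type) (_ : Group G) (_ : Finite G), Nat.card G = m * p ∧ ¬IsCyclic G := by
  have : Fact p.Prime := ⟨hp⟩
  obtain ⟨a, ha⟩ := exists_prime_orderOf_dvd_card' (G := MulAut (Multiplicative (ZMod m))) p
    (by rwa [IsCyclic.card_mulAut, Nat.card_eq_fintype_card, Fintype.card_multiplicative,
      ZMod.card])
  let A := Subgroup.zpowers a
  have hA : A.subtype ≠ 1 := fun h1 => by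
    have : a = 1 := by simpa using DFunLike.congr_fun h1 ⟨a, Subgroup.mem_zpowers a⟩
    rw [this, orderOf_one] at ha
    exact hp.one_lt.ne ha
  refine ⟨_ ⋊[A.subtype] A, inferInstance, Finite.of_equiv _ SemidirectProduct.equivProd.symm,
    ?_, SemidirectProduct.not_isCyclic_of_ne_one hA⟩
  rw [SemidirectProduct.card, Nat.card_zpowers, ha, Nat.card_eq_fintype_card,
    Fintype.card_multiplicative, ZMod.card]

theorem exists_not_isCyclic_card_eq_of_not_coprime_totient {n : ℕ} (hn : 0 < n)
    (h : ¬n.Coprime n.totient) :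
    ∃ (G : Type) (_ : Group G) (_ : Finite G), Nat.card G = n ∧ ¬IsCyclic G := by
  obtain ⟨p, hp, ⟨m, rfl⟩, hp_totient⟩ := Nat.Prime.not_coprime_iff_dvd.mp h
  have : NeZero m := ⟨right_ne_zero_of_mul hn.ne'⟩
  have : NeZero p := ⟨hp.ne_zero⟩
  rw [mul_comm p m]
  by_cases hpm : p ∣ m
  · exact exists_not_isCyclic_card_eq_mul_of_not_coprime
      (Nat.not_coprime_of_dvd_of_dvd hp.one_lt hpm dvd_rfl)
  · rw [Nat.totient_mul_of_prime_of_not_dvd hp hpm] at hp_totient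
    refine exists_not_isCyclic_card_eq_mul_of_dvd_totient hp
      ((hp.dvd_mul.mp hp_totient).resolve_left fun hp_dvd => ?_)
    exact Nat.not_dvd_of_pos_of_lt (Nat.sub_pos_of_lt hp.one_lt) (Nat.sub_lt hp.pos one_pos) hp_dvd

/-- A positive integer `n` is a cyclic number (every group of order `n` is cyclic)
if and only if `gcd(n, φ(n)) = 1`. -/
theorem cyclic_number_iff_coprime_totient (n : ℕ) (hn : 0 < n) :
    (∀ (G : Type) [Group G] [Fintype G], Fintype.card G = n → IsCyclic G) ↔
      Nat.Coprime n (Nat.totient n) := by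
  constructor
  · intro hall
    by_contra hcop
    obtain ⟨G, _, _, hcard, hG⟩ := exists_not_isCyclic_card_eq_of_not_coprime_totient hn hcop
    have := Fintype.ofFinite G
    exact hG (hall G (by rwa [← Nat.card_eq_fintype_card]))
  · intro h G _ _ hcard
    exact isCyclic_of_coprime_card_totient (by rwa [Nat.card_eq_fintype_card, hcard])
end

section
/- (Vaaler's approximation) For any real H ≥ 1, there exist complex numbers a_h (0 < |h| ≤ H) and nonnegative reals b_h (|h| ≤ H) such that for all real t, |ψ(t) - ∑_{0 < |h| ≤ H} a_h e(ht)| ≤ ∑_{|h| ≤ H} b_h e(ht), with |a_h| ≪ 1/|h| and b_h ≪ 1/H, where ψ(t) = {t} - 1/2 and e(t) = e^{2πit}. -/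
open Finset

/-- `e(t) = e^{2πit}`. -/
noncomputable def eTwoPi (t : ℝ) : ℂ := Complex.exp (2 * Real.pi * Complex.I * t)

/-- The sawtooth function `ψ(t) = {t} - 1/2`. -/
noncomputable def sawtooth (t : ℝ) : ℝ := Int.fract t - 1 / 2

/-!
The approximant is `ψ * J` for the Jackson kernel `J = |D_M|⁴ / ‖D_M‖₄⁴`, where `D_M` is the
Dirichlet kernel and `4M ≤ H`. The error `G = ψ - ψ * J` satisfies `G' = J ≥ 0` on `(0, 1)`,
`G(0⁺) = -1/2`, `G(1⁻) = 1/2`, and `G` is odd about `1/2`; hence `|G| ≤ 1/2`, and the decay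
`J(u) ≪ 1/(M³u⁴)` gives `|G(x)| ≪ 1/(H³x³)` for `0 < x ≤ 1/2`.
The majorant is `H⁻²` times the sum of the Fejér kernels `|D_m|²` over the dyadic scales
`m = 0, 1, 2, 4, … ≤ H/2`, whose coefficients add up to `O(H)`. If `Hx ≲ 1`, the largest scale has
`|D_m(x)|² ≫ H²`, which beats `|G| ≤ 1/2`; otherwise some scale has `(2m + 1)x ≍ 1`, so
`|D_m(x)|² ≫ x⁻²`, which beats `|G| ≪ H⁻³x⁻³`.
-/

open Real

lemma sum_Icc_neg_succ {β : Type*} [AddCommMonoid β] (m : ℕ) (f : ℤ → β) :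
    ∑ j ∈ Icc (-((m + 1 : ℕ) : ℤ)) (m + 1 : ℕ), f j =
      f (-(m + 1)) + f (m + 1) + ∑ j ∈ Icc (-(m : ℤ)) m, f j := by
  have h₁ : (-(m + 1 : ℤ)) ∉ insert ((m : ℤ) + 1) (Icc (-(m : ℤ)) m) := by
    simp only [mem_insert, mem_Icc]; omega
  have h₂ : ((m : ℤ) + 1) ∉ Icc (-(m : ℤ)) m := by simp
  rw [add_assoc, ← sum_insert h₂, ← sum_insert h₁]
  congr 1
  ext j; simp only [mem_insert, mem_Icc]; push_cast; omega

lemma sum_Icc_neg_eq {β : Type*} [AddCommMonoid β] (n : ℕ) (f : ℤ → β) :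
    ∑ h ∈ Icc (-(n : ℤ)) n, f h = f 0 + ∑ h ∈ Icc (1 : ℤ) n, (f h + f (-h)) := by
  induction n with
  | zero => simp
  | succ n ih =>
    rw [sum_Icc_neg_succ, ih, Nat.cast_succ,
      ← insert_Icc_right_eq_Icc_add_one (by omega), sum_insert (by simp)]
    abel

lemma sum_Icc_neg_comp_neg {β : Type*} [AddCommMonoid β] (m : ℕ) (f : ℤ → β) :
    ∑ j ∈ Icc (-(m : ℤ)) m, f (-j) = ∑ j ∈ Icc (-(m : ℤ)) m, f j := by
  rw [sum_Icc_neg_eq, sum_Icc_neg_eq]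
  simp [add_comm]

lemma eTwoPi_eq_exp (x : ℝ) : eTwoPi x = Complex.exp ((2 * π * x : ℝ) * Complex.I) := by
  rw [eTwoPi]; push_cast; ring_nf

lemma norm_eTwoPi (x : ℝ) : ‖eTwoPi x‖ = 1 := by
  rw [eTwoPi_eq_exp, Complex.norm_exp_ofReal_mul_I]

lemma eTwoPi_ne_zero (x : ℝ) : eTwoPi x ≠ 0 := Complex.exp_ne_zero _

lemma eTwoPi_add (x y : ℝ) : eTwoPi (x + y) = eTwoPi x * eTwoPi y := by
  simp only [eTwoPi, ← Complex.exp_add]; push_cast; ring_nf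

lemma eTwoPi_int_mul (h : ℤ) (x : ℝ) : eTwoPi (h * x) = eTwoPi x ^ h := by
  rw [eTwoPi, eTwoPi, ← Complex.exp_int_mul]; push_cast; ring_nf

lemma eTwoPi_intCast (k : ℤ) : eTwoPi k = 1 := by
  rw [eTwoPi, ← Complex.exp_int_mul_two_pi_mul_I k]; push_cast; ring_nf

lemma eTwoPi_fract (t : ℝ) : eTwoPi (Int.fract t) = eTwoPi t := by
  rw [Int.fract, sub_eq_add_neg, eTwoPi_add, ← Int.cast_neg, eTwoPi_intCast, mul_one]

lemma eTwoPi_one_sub (x : ℝ) : eTwoPi (1 - x) = (eTwoPi x)⁻¹ := by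
  rw [sub_eq_add_neg, eTwoPi_add, ← Int.cast_one, eTwoPi_intCast, one_mul]
  simpa using eTwoPi_int_mul (-1) x

lemma norm_eTwoPi_sub_one (y : ℝ) : ‖eTwoPi y - 1‖ = 2 * |sin (π * y)| := by
  rw [eTwoPi_eq_exp, mul_comm, Complex.norm_exp_I_mul_ofReal_sub_one, norm_mul, Real.norm_eq_abs]
  norm_num; ring_nf

lemma eTwoPi_zpow_add_zpow_neg (h : ℤ) (x : ℝ) :
    eTwoPi x ^ h + eTwoPi x ^ (-h) = (2 * cos (2 * π * h * x) : ℝ) := by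
  rw [← eTwoPi_int_mul, ← eTwoPi_int_mul, eTwoPi_eq_exp, eTwoPi_eq_exp, Complex.exp_mul_I,
    Complex.exp_mul_I]
  push_cast
  simp only [mul_neg, neg_mul, Complex.cos_neg, Complex.sin_neg]
  ring_nf

lemma eTwoPi_zpow_sub_zpow_neg (h : ℤ) (x : ℝ) :
    eTwoPi x ^ h - eTwoPi x ^ (-h) = (2 * sin (2 * π * h * x) : ℝ) * Complex.I := by
  rw [← eTwoPi_int_mul, ← eTwoPi_int_mul, eTwoPi_eq_exp, eTwoPi_eq_exp, Complex.exp_mul_I,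
    Complex.exp_mul_I]
  push_cast
  simp only [mul_neg, neg_mul, Complex.cos_neg, Complex.sin_neg]
  ring_nf

noncomputable def dirichletKernel (m : ℕ) (z : ℂ) : ℂ := ∑ j ∈ Icc (-(m : ℤ)) m, z ^ j

lemma dirichletKernel_one (m : ℕ) : dirichletKernel m 1 = 2 * m + 1 := by
  simp only [dirichletKernel, one_zpow, sum_const, Int.card_Icc, nsmul_eq_mul, mul_one]
  rw [show (m + 1 - -m : ℤ).toNat = 2 * m + 1 by omega]
  push_cast; ring

lemma dirichletKernel_inv (m : ℕ) (z : ℂ) : dirichletKernel m z⁻¹ = dirichletKernel m z := by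
  simp only [dirichletKernel, inv_zpow', sum_Icc_neg_comp_neg (f := fun j => z ^ j)]

lemma dirichletKernel_mul_sub_one (m : ℕ) {z : ℂ} (hz : z ≠ 0) :
    dirichletKernel m z * (z - 1) = z ^ ((m : ℤ) + 1) - z ^ (-(m : ℤ)) := by
  induction m with
  | zero => simp [dirichletKernel]
  | succ m ih =>
    rw [dirichletKernel, sum_Icc_neg_succ, add_mul, ← dirichletKernel, ih]
    push_cast
    simp only [zpow_add₀ hz, zpow_neg, zpow_one]
    field_simp
    ring

lemma norm_dirichletKernel_mul (m : ℕ) (x : ℝ) :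
    ‖dirichletKernel m (eTwoPi x)‖ * |sin (π * x)| = |sin ((2 * m + 1) * π * x)| := by
  have key := congrArg (‖·‖) (dirichletKernel_mul_sub_one m (eTwoPi_ne_zero x))
  have hsplit : eTwoPi x ^ ((m : ℤ) + 1) - eTwoPi x ^ (-(m : ℤ)) =
      eTwoPi x ^ (-(m : ℤ)) * (eTwoPi ((2 * m + 1 : ℤ) * x) - 1) := by
    rw [eTwoPi_int_mul, mul_sub, ← zpow_add₀ (eTwoPi_ne_zero x), mul_one]
    ring_nf
  simp only [hsplit, norm_mul, norm_zpow, norm_eTwoPi, one_zpow, one_mul,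
    norm_eTwoPi_sub_one] at key
  push_cast at key
  rw [show (2 * m + 1) * π * x = π * ((2 * m + 1) * x) by ring]
  linear_combination key / 2

lemma two_mul_le_sin_pi_mul {x : ℝ} (hx₀ : 0 ≤ x) (hx : x ≤ 1 / 2) : 2 * x ≤ sin (π * x) := by
  have := mul_le_sin (by positivity : 0 ≤ π * x) (by nlinarith [pi_pos])
  rwa [← mul_assoc, div_mul_cancel₀ _ pi_ne_zero] at this

lemma norm_dirichletKernel_le (m : ℕ) {x : ℝ} (hx₀ : 0 < x) (hx : x ≤ 1 / 2) :
    ‖dirichletKernel m (eTwoPi x)‖ ≤ 1 / (2 * x) := by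
  have key := norm_dirichletKernel_mul m x
  have hsin := two_mul_le_sin_pi_mul hx₀.le hx
  rw [abs_of_pos (by linarith)] at key
  rw [le_div_iff₀ (by positivity)]
  nlinarith [abs_sin_le_one ((2 * m + 1) * π * x), norm_nonneg (dirichletKernel m (eTwoPi x))]

lemma le_norm_dirichletKernel (m : ℕ) {x : ℝ} (hx₀ : 0 ≤ x) (hx : (2 * m + 1) * x ≤ 1 / 2) :
    2 / π * (2 * m + 1) ≤ ‖dirichletKernel m (eTwoPi x)‖ := by
  rcases hx₀.eq_or_lt with rfl | hx₀
  · rw [← Int.cast_zero, eTwoPi_intCast, dirichletKernel_one,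
      show (2 * m + 1 : ℂ) = ((2 * m + 1 : ℝ) : ℂ) by push_cast; ring, Complex.norm_real,
      Real.norm_eq_abs, abs_of_pos (by positivity)]
    exact mul_le_of_le_one_left (by positivity)
      ((div_le_one pi_pos).mpr (by linarith [pi_gt_three]))
  · have key := norm_dirichletKernel_mul m x
    have hm : (1 : ℝ) ≤ 2 * m + 1 := by linarith [m.cast_nonneg (α := ℝ)]
    have hnum := two_mul_le_sin_pi_mul (by positivity) hx
    have hden := sin_le (by positivity : 0 ≤ π * x)
    have hpos := sin_pos_of_pos_of_lt_pi (by positivity : 0 < π * x) (by nlinarith [pi_pos])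
    rw [abs_of_pos hpos, show (2 * m + 1) * π * x = π * ((2 * m + 1) * x) by ring,
      abs_of_pos (by linarith [mul_pos (by linarith : (0:ℝ) < 2 * m + 1) hx₀])] at key
    rw [div_mul_eq_mul_div, div_le_iff₀ pi_pos]
    have := norm_nonneg (dirichletKernel m (eTwoPi x))
    nlinarith

noncomputable def autocorr (w : ℤ → ℝ) (m : ℕ) (h : ℤ) : ℝ :=
  ∑ j ∈ Icc (-(m : ℤ)) m, w j * w (j - h)

section Autocorr

variable {w : ℤ → ℝ} {m : ℕ}

lemma autocorr_nonneg (hw : ∀ j, 0 ≤ w j) (h : ℤ) : 0 ≤ autocorr w m h :=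
  sum_nonneg fun j _ => mul_nonneg (hw j) (hw (j - h))

lemma autocorr_neg (hw : ∀ j, w (-j) = w j) (h : ℤ) : autocorr w m (-h) = autocorr w m h := by
  rw [autocorr, ← sum_Icc_neg_comp_neg]
  refine sum_congr rfl fun j _ => ?_
  rw [hw, show -j - -h = -(j - h) by ring, hw]

lemma autocorr_eq_zero (hw : ∀ j ∉ Icc (-(m : ℤ)) m, w j = 0) {h : ℤ}
    (hh : h ∉ Icc (-(2 * m : ℤ)) (2 * m)) : autocorr w m h = 0 := by
  refine sum_eq_zero fun j hj => ?_
  rw [hw (j - h) (by simp only [mem_Icc] at hj hh ⊢; omega), mul_zero]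

lemma sum_sq_comp_sub_le (hw : ∀ j ∉ Icc (-(m : ℤ)) m, w j = 0) (h : ℤ) :
    ∑ j ∈ Icc (-(m : ℤ)) m, w (j - h) ^ 2 ≤ ∑ j ∈ Icc (-(m : ℤ)) m, w j ^ 2 := by
  set I := Icc (-(m : ℤ)) m
  have hshift : ∑ j ∈ I, w (j - h) ^ 2 = ∑ k ∈ I.map (Equiv.subRight h), w k ^ 2 := by simp
  rw [hshift]
  calc ∑ k ∈ I.map (Equiv.subRight h), w k ^ 2 ≤ ∑ k ∈ I.map (Equiv.subRight h) ∪ I, w k ^ 2 :=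
        sum_le_sum_of_subset_of_nonneg subset_union_left fun _ _ _ => sq_nonneg _
    _ = ∑ k ∈ I, w k ^ 2 :=
        (sum_subset subset_union_right fun k _ hk => by rw [hw k hk, sq, zero_mul]).symm

lemma autocorr_le_autocorr_zero (hw : ∀ j ∉ Icc (-(m : ℤ)) m, w j = 0) (h : ℤ) :
    autocorr w m h ≤ autocorr w m 0 := by
  have hsq : autocorr w m 0 = ∑ j ∈ Icc (-(m : ℤ)) m, w j ^ 2 := by simp [autocorr, sq]
  have hamgm : 2 * autocorr w m h ≤
      ∑ j ∈ Icc (-(m : ℤ)) m, w j ^ 2 + ∑ j ∈ Icc (-(m : ℤ)) m, w (j - h) ^ 2 := by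
    rw [autocorr, mul_sum, ← sum_add_distrib]
    exact sum_le_sum fun j _ => by nlinarith [sq_nonneg (w j - w (j - h))]
  linarith [sum_sq_comp_sub_le hw h]

lemma sum_comp_sub_mul_eq (hw : ∀ j ∉ Icc (-(m : ℤ)) m, w j = 0) {n : ℕ} (hmn : 2 * m ≤ n)
    {j : ℤ} (hj : j ∈ Icc (-(m : ℤ)) m) (g : ℤ → ℂ) :
    ∑ h ∈ Icc (-(n : ℤ)) n, (w (j - h) : ℂ) * g h =
      ∑ k ∈ Icc (-(m : ℤ)) m, (w k : ℂ) * g (j - k) := by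
  rw [mem_Icc] at hj
  calc ∑ h ∈ Icc (-(n : ℤ)) n, (w (j - h) : ℂ) * g h
      = ∑ k ∈ Icc (j - n) (j + n), (w k : ℂ) * g (j - k) := by
        refine sum_nbij' (j - ·) (j - ·) ?_ ?_ ?_ ?_ ?_ <;> intro k hk <;>
          simp_all only [mem_Icc, sub_sub_cancel] <;> omega
    _ = ∑ k ∈ Icc (-(m : ℤ)) m, (w k : ℂ) * g (j - k) := by
        refine (sum_subset (fun k hk => ?_) fun k _ hk => ?_).symm
        · simp only [mem_Icc] at hk ⊢; omega
        · rw [hw k hk, Complex.ofReal_zero, zero_mul]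

lemma sum_autocorr_mul_zpow (hw : ∀ j ∉ Icc (-(m : ℤ)) m, w j = 0) {n : ℕ} (hmn : 2 * m ≤ n)
    {z : ℂ} (hz : ‖z‖ = 1) :
    ∑ h ∈ Icc (-(n : ℤ)) n, (autocorr w m h : ℂ) * z ^ h =
      (‖∑ j ∈ Icc (-(m : ℤ)) m, (w j : ℂ) * z ^ j‖ ^ 2 : ℝ) := by
  have hz₀ : z ≠ 0 := norm_ne_zero_iff.mp (by rw [hz]; exact one_ne_zero)
  rw [Complex.ofReal_pow, ← Complex.mul_conj', sum_mul]
  simp only [autocorr, Complex.ofReal_sum, Complex.ofReal_mul, sum_mul]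
  rw [sum_comm]
  refine sum_congr rfl fun j hj => ?_
  simp only [mul_assoc, ← mul_sum]
  rw [sum_comp_sub_mul_eq hw hmn hj, map_sum]
  simp only [mul_sum]
  refine sum_congr rfl fun k _ => ?_
  rw [map_mul, Complex.conj_ofReal, map_zpow₀, ← Complex.inv_eq_conj hz, inv_zpow', zpow_sub₀ hz₀,
    zpow_neg]
  ring

end Autocorr

noncomputable def boxIndicator (m : ℕ) (j : ℤ) : ℝ := if j ∈ Icc (-(m : ℤ)) m then 1 else 0

noncomputable def fejerCoeff (m : ℕ) : ℤ → ℝ := autocorr (boxIndicator m) m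

noncomputable def jacksonCoeff (m : ℕ) : ℤ → ℝ := autocorr (fejerCoeff m) (2 * m)

section Coefficients

variable (m : ℕ)

lemma boxIndicator_nonneg (j : ℤ) : 0 ≤ boxIndicator m j := by
  unfold boxIndicator; split_ifs <;> norm_num

lemma boxIndicator_neg (j : ℤ) : boxIndicator m (-j) = boxIndicator m j := by
  simp only [boxIndicator, mem_Icc]
  congr 1
  simp only [eq_iff_iff]; omega

lemma boxIndicator_eq_zero {j : ℤ} (hj : j ∉ Icc (-(m : ℤ)) m) : boxIndicator m j = 0 :=
  if_neg hj

lemma fejerCoeff_nonneg (h : ℤ) : 0 ≤ fejerCoeff m h :=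
  autocorr_nonneg (boxIndicator_nonneg m) h

lemma fejerCoeff_neg (h : ℤ) : fejerCoeff m (-h) = fejerCoeff m h :=
  autocorr_neg (boxIndicator_neg m) h

lemma fejerCoeff_eq_zero {h : ℤ} (hh : h ∉ Icc (-((2 * m : ℕ) : ℤ)) (2 * m : ℕ)) :
    fejerCoeff m h = 0 :=
  autocorr_eq_zero (fun _ => boxIndicator_eq_zero m) (by push_cast at hh; exact hh)

lemma fejerCoeff_zero : fejerCoeff m 0 = 2 * m + 1 := by
  rw [fejerCoeff, autocorr, sum_congr rfl fun j hj => by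
    rw [sub_zero, boxIndicator, if_pos hj, mul_one], sum_const, Int.card_Icc, nsmul_one,
    show (m + 1 - -m : ℤ).toNat = 2 * m + 1 by omega]
  push_cast; ring

lemma fejerCoeff_le (h : ℤ) : fejerCoeff m h ≤ 2 * m + 1 :=
  fejerCoeff_zero m ▸ autocorr_le_autocorr_zero (fun _ => boxIndicator_eq_zero m) h

lemma le_fejerCoeff {h : ℤ} (h₀ : 0 ≤ h) (hm : h ≤ m) : (m : ℝ) + 1 ≤ fejerCoeff m h := by
  have hsub : Icc (h - m) h ⊆ Icc (-(m : ℤ)) m := fun j hj => by simp only [mem_Icc] at hj ⊢; omega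
  calc (m : ℝ) + 1 = ∑ j ∈ Icc (h - m) h, 1 := by
        rw [sum_const, Int.card_Icc, nsmul_one, show (h + 1 - (h - m)).toNat = m + 1 by omega]
        push_cast; ring
    _ = ∑ j ∈ Icc (h - m) h, boxIndicator m j * boxIndicator m (j - h) := by
        refine sum_congr rfl fun j hj => ?_
        rw [mem_Icc] at hj
        rw [boxIndicator, boxIndicator, if_pos (by rw [mem_Icc]; omega),
          if_pos (by rw [mem_Icc]; omega), mul_one]
    _ ≤ fejerCoeff m h := sum_le_sum_of_subset_of_nonneg hsub fun j _ _ =>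
        mul_nonneg (boxIndicator_nonneg m j) (boxIndicator_nonneg m (j - h))

lemma sum_fejerCoeff_mul_zpow {n : ℕ} (hmn : 2 * m ≤ n) {z : ℂ} (hz : ‖z‖ = 1) :
    ∑ h ∈ Icc (-(n : ℤ)) n, (fejerCoeff m h : ℂ) * z ^ h = (‖dirichletKernel m z‖ ^ 2 : ℝ) := by
  rw [fejerCoeff, sum_autocorr_mul_zpow (fun _ => boxIndicator_eq_zero m) hmn hz, dirichletKernel]
  congr 3
  refine sum_congr rfl fun j hj => ?_
  rw [boxIndicator, if_pos hj, Complex.ofReal_one, one_mul]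

lemma jacksonCoeff_nonneg (h : ℤ) : 0 ≤ jacksonCoeff m h :=
  autocorr_nonneg (fejerCoeff_nonneg m) h

lemma jacksonCoeff_neg (h : ℤ) : jacksonCoeff m (-h) = jacksonCoeff m h :=
  autocorr_neg (fejerCoeff_neg m) h

lemma jacksonCoeff_le (h : ℤ) : jacksonCoeff m h ≤ jacksonCoeff m 0 :=
  autocorr_le_autocorr_zero (fun _ => fejerCoeff_eq_zero m) h

lemma pow_three_le_jacksonCoeff_zero : ((m : ℝ) + 1) ^ 3 ≤ jacksonCoeff m 0 := by
  have hsub : Icc (0 : ℤ) m ⊆ Icc (-((2 * m : ℕ) : ℤ)) (2 * m : ℕ) := fun j hj => by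
    simp only [mem_Icc] at hj ⊢; omega
  calc ((m : ℝ) + 1) ^ 3 = ∑ j ∈ Icc (0 : ℤ) m, ((m : ℝ) + 1) ^ 2 := by
        rw [sum_const, Int.card_Icc, nsmul_eq_mul, show ((m : ℤ) + 1 - 0).toNat = m + 1 by omega]
        push_cast; ring
    _ ≤ ∑ j ∈ Icc (0 : ℤ) m, fejerCoeff m j ^ 2 := sum_le_sum fun j hj => by
        rw [mem_Icc] at hj
        exact pow_le_pow_left₀ (by positivity) (le_fejerCoeff m hj.1 hj.2) 2
    _ ≤ ∑ j ∈ Icc (-((2 * m : ℕ) : ℤ)) (2 * m : ℕ), fejerCoeff m j ^ 2 :=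
        sum_le_sum_of_subset_of_nonneg hsub fun _ _ _ => sq_nonneg _
    _ = jacksonCoeff m 0 := by simp [jacksonCoeff, autocorr, sq]

lemma jacksonCoeff_zero_pos : 0 < jacksonCoeff m 0 :=
  lt_of_lt_of_le (by positivity) (pow_three_le_jacksonCoeff_zero m)

lemma sum_jacksonCoeff_mul_zpow {n : ℕ} (hmn : 4 * m ≤ n) {z : ℂ} (hz : ‖z‖ = 1) :
    ∑ h ∈ Icc (-(n : ℤ)) n, (jacksonCoeff m h : ℂ) * z ^ h = (‖dirichletKernel m z‖ ^ 4 : ℝ) := by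
  rw [jacksonCoeff, sum_autocorr_mul_zpow (fun _ => fejerCoeff_eq_zero m) (by omega) hz]
  have hfejer := sum_fejerCoeff_mul_zpow m (n := 2 * m) le_rfl hz
  push_cast at hfejer ⊢
  rw [hfejer]
  simp [← pow_mul]

end Coefficients

lemma sub_le_sub_of_hasDerivAt_le {f g f' g' : ℝ → ℝ} {a b : ℝ} (hab : a ≤ b)
    (hf : ∀ x ∈ Set.Icc a b, HasDerivAt f (f' x) x) (hg : ∀ x ∈ Set.Icc a b, HasDerivAt g (g' x) x)
    (hle : ∀ x ∈ Set.Icc a b, f' x ≤ g' x) : f b - f a ≤ g b - g a := by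
  have hmono : MonotoneOn (fun x => g x - f x) (Set.Icc a b) := by
    refine monotoneOn_of_hasDerivWithinAt_nonneg (convex_Icc a b) (fun x hx => ?_)
      (fun x hx => ?_) (fun x hx => ?_) (f' := fun x => g' x - f' x)
    · exact ((hg x hx).sub (hf x hx)).continuousAt.continuousWithinAt
    · exact ((hg x (interior_subset hx)).sub (hf x (interior_subset hx))).hasDerivWithinAt
    · exact sub_nonneg.mpr (hle x (interior_subset hx))
  linarith [hmono ⟨le_rfl, hab⟩ ⟨hab, le_rfl⟩ hab]

noncomputable def cosPoly (n : ℕ) (c : ℤ → ℝ) (x : ℝ) : ℝ :=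
  ∑ h ∈ Icc (1 : ℤ) n, c h * (2 * cos (2 * π * h * x))

noncomputable def sawtoothDefect (n : ℕ) (c : ℤ → ℝ) (x : ℝ) : ℝ :=
  x - 1 / 2 + ∑ h ∈ Icc (1 : ℤ) n, c h * (sin (2 * π * h * x) / (π * h))

section SawtoothDefect

variable (n : ℕ) (c : ℤ → ℝ)

lemma sum_mul_eTwoPi_zpow (hc : ∀ h, c (-h) = c h) (x : ℝ) :
    ∑ h ∈ Icc (-(n : ℤ)) n, (c h : ℂ) * eTwoPi x ^ h = (c 0 + cosPoly n c x : ℝ) := by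
  rw [sum_Icc_neg_eq, zpow_zero, mul_one, cosPoly]
  push_cast
  congr 1
  refine sum_congr rfl fun h _ => ?_
  rw [hc, ← mul_add, eTwoPi_zpow_add_zpow_neg]
  push_cast; ring

lemma hasDerivAt_sawtoothDefect (x : ℝ) :
    HasDerivAt (sawtoothDefect n c) (1 + cosPoly n c x) x := by
  refine ((hasDerivAt_id x).sub_const _).add (HasDerivAt.fun_sum fun h hh => ?_)
  have hh : (h : ℝ) ≠ 0 := by rw [mem_Icc] at hh; exact_mod_cast (by omega : h ≠ 0)
  have := ((((hasDerivAt_id x).const_mul (2 * π * h)).sin).div_const (π * h)).const_mul (c h)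
  simp only [id, mul_one] at this
  exact this.congr_deriv (by field_simp)

lemma sawtoothDefect_zero : sawtoothDefect n c 0 = -(1 / 2) := by
  simp [sawtoothDefect]

lemma sawtoothDefect_half : sawtoothDefect n c (1 / 2) = 0 := by
  rw [sawtoothDefect, sum_eq_zero fun h _ => by
    rw [show 2 * π * h * (1 / 2) = h * π by ring, sin_int_mul_pi, zero_div, mul_zero]]
  norm_num

lemma sawtoothDefect_one_sub (x : ℝ) :
    sawtoothDefect n c (1 - x) = -sawtoothDefect n c x := by
  simp only [sawtoothDefect, neg_add, ← sum_neg_distrib]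
  congr 1
  · ring
  · refine sum_congr rfl fun h _ => ?_
    rw [show 2 * π * h * (1 - x) = (h : ℤ) * (2 * π) - 2 * π * h * x by ring,
      sin_int_mul_two_pi_sub]
    ring

lemma sawtoothDefect_one : sawtoothDefect n c 1 = 1 / 2 := by
  simpa [sawtoothDefect_zero] using sawtoothDefect_one_sub n c 0

variable {n c}

lemma monotone_sawtoothDefect (hc : ∀ x, 0 ≤ 1 + cosPoly n c x) : Monotone (sawtoothDefect n c) :=
  monotone_of_hasDerivAt_nonneg (hasDerivAt_sawtoothDefect n c) hc

lemma abs_sawtoothDefect_le_half (hc : ∀ x, 0 ≤ 1 + cosPoly n c x) {x : ℝ} (hx₀ : 0 ≤ x)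
    (hx₁ : x ≤ 1) : |sawtoothDefect n c x| ≤ 1 / 2 := by
  have h₀ := monotone_sawtoothDefect hc hx₀
  have h₁ := monotone_sawtoothDefect hc hx₁
  rw [sawtoothDefect_zero] at h₀
  rw [sawtoothDefect_one] at h₁
  exact abs_le.mpr ⟨h₀, h₁⟩

lemma abs_sawtoothDefect_le_of_cosPoly_le {K x : ℝ} (hK : 0 ≤ K) (hc : ∀ x, 0 ≤ 1 + cosPoly n c x)
    (hdecay : ∀ u ∈ Set.Icc x (1 / 2), 1 + cosPoly n c u ≤ 3 * K / u ^ 4) (hx₀ : 0 < x)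
    (hx : x ≤ 1 / 2) : |sawtoothDefect n c x| ≤ K / x ^ 3 := by
  have hcmp := sub_le_sub_of_hasDerivAt_le hx (fun u _ => hasDerivAt_sawtoothDefect n c u)
    (fun u hu => ?_) hdecay (g := fun u => -K / u ^ 3)
  · have hneg := monotone_sawtoothDefect hc hx
    rw [sawtoothDefect_half] at hcmp hneg
    rw [abs_of_nonpos hneg]
    have : 0 ≤ K / (1 / 2) ^ 3 := by positivity
    simp only [neg_div] at hcmp
    linarith
  · have hu : u ≠ 0 := (hx₀.trans_le hu.1).ne'
    have := ((hasDerivAt_pow 3 u).inv (pow_ne_zero 3 hu)).const_mul (-K)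
    simp only [Pi.inv_apply, ← div_eq_mul_inv] at this
    exact this.congr_deriv (by field_simp; push_cast; ring)

end SawtoothDefect

lemma sum_erase_zero_Icc_neg_eq {β : Type*} [AddCommGroup β] (n : ℕ) (f : ℤ → β) :
    ∑ h ∈ (Icc (-(n : ℤ)) n).erase 0, f h = ∑ h ∈ Icc (1 : ℤ) n, (f h + f (-h)) := by
  rw [← add_right_inj (f 0), add_sum_erase _ _ (by simp), sum_Icc_neg_eq]

noncomputable def sawtoothCoeff (c : ℤ → ℝ) (h : ℤ) : ℂ := (c h / (2 * π * h) : ℝ) * Complex.I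

lemma norm_sawtoothCoeff_le {c : ℤ → ℝ} (hc₀ : ∀ h, 0 ≤ c h) (hc₁ : ∀ h, c h ≤ 1) {h : ℤ}
    (hh : h ≠ 0) : ‖sawtoothCoeff c h‖ ≤ 1 / |(h : ℝ)| := by
  have hh : 0 < |(h : ℝ)| := abs_pos.mpr (Int.cast_ne_zero.mpr hh)
  rw [sawtoothCoeff, norm_mul, Complex.norm_I, mul_one, Complex.norm_real, Real.norm_eq_abs,
    abs_div, abs_of_nonneg (hc₀ h), abs_mul, abs_of_pos (by positivity : (0 : ℝ) < 2 * π),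
    div_le_div_iff₀ (by positivity) hh]
  nlinarith [hc₁ h, pi_gt_three]

lemma sawtooth_sub_sum_eq {n : ℕ} {c : ℤ → ℝ} (hc : ∀ h, c (-h) = c h) (t : ℝ) :
    (sawtooth t : ℂ) - ∑ h ∈ (Icc (-(n : ℤ)) n).erase 0, sawtoothCoeff c h * eTwoPi (h * t) =
      (sawtoothDefect n c (Int.fract t) : ℝ) := by
  have hpair : ∀ h ∈ Icc (1 : ℤ) n, sawtoothCoeff c h * eTwoPi (h * t) +
      sawtoothCoeff c (-h) * eTwoPi ((-h : ℤ) * t) =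
        (-(c h * (sin (2 * π * h * Int.fract t) / (π * h))) : ℝ) := fun h hh => by
    have hh : (h : ℝ) ≠ 0 := by rw [mem_Icc] at hh; exact_mod_cast (by omega : h ≠ 0)
    have hneg : sawtoothCoeff c (-h) = -sawtoothCoeff c h := by
      simp only [sawtoothCoeff, hc, Int.cast_neg, mul_neg, div_neg, Complex.ofReal_neg, neg_mul]
    rw [eTwoPi_int_mul, eTwoPi_int_mul, ← eTwoPi_fract t, hneg, neg_mul, ← sub_eq_add_neg,
      ← mul_sub, eTwoPi_zpow_sub_zpow_neg, sawtoothCoeff]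
    push_cast
    field_simp
    rw [Complex.I_sq]
    ring
  rw [sum_erase_zero_Icc_neg_eq, sum_congr rfl hpair, sawtooth, sawtoothDefect]
  push_cast
  rw [sum_neg_distrib]
  ring

noncomputable def jacksonWeight (n : ℕ) (h : ℤ) : ℝ :=
  jacksonCoeff (n / 4) h / jacksonCoeff (n / 4) 0

section JacksonWeight

variable (n : ℕ)

lemma jacksonWeight_nonneg (h : ℤ) : 0 ≤ jacksonWeight n h :=
  div_nonneg (jacksonCoeff_nonneg _ h) (jacksonCoeff_zero_pos _).le

lemma jacksonWeight_le_one (h : ℤ) : jacksonWeight n h ≤ 1 :=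
  div_le_one_of_le₀ (jacksonCoeff_le _ h) (jacksonCoeff_zero_pos _).le

lemma jacksonWeight_neg (h : ℤ) : jacksonWeight n (-h) = jacksonWeight n h := by
  rw [jacksonWeight, jacksonCoeff_neg, jacksonWeight]

lemma one_add_cosPoly_jacksonWeight (x : ℝ) :
    1 + cosPoly n (jacksonWeight n) x =
      ‖dirichletKernel (n / 4) (eTwoPi x)‖ ^ 4 / jacksonCoeff (n / 4) 0 := by
  have hS := (jacksonCoeff_zero_pos (n / 4)).ne'
  have key := sum_mul_eTwoPi_zpow n _ (jacksonWeight_neg n) x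
  simp only [jacksonWeight, Complex.ofReal_div, div_mul_eq_mul_div, ← sum_div,
    sum_jacksonCoeff_mul_zpow (n / 4) (Nat.mul_div_le n 4) (norm_eTwoPi x), div_self hS] at key
  exact_mod_cast key.symm

lemma one_add_cosPoly_jacksonWeight_nonneg (x : ℝ) : 0 ≤ 1 + cosPoly n (jacksonWeight n) x := by
  rw [one_add_cosPoly_jacksonWeight]
  exact div_nonneg (by positivity) (jacksonCoeff_zero_pos _).le

lemma abs_sawtoothDefect_jacksonWeight_le {x : ℝ} (hx₀ : 0 < x) (hx : x ≤ 1 / 2) :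
    |sawtoothDefect n (jacksonWeight n) x| ≤ 1 / (48 * ((n / 4 : ℕ) + 1) ^ 3 * x ^ 3) := by
  set S := jacksonCoeff (n / 4) 0
  have hS : 0 < S := jacksonCoeff_zero_pos _
  have hdecay : ∀ u ∈ Set.Icc x (1 / 2),
      1 + cosPoly n (jacksonWeight n) u ≤ 3 * (1 / (48 * S)) / u ^ 4 := fun u hu => by
    have hu₀ : 0 < u := hx₀.trans_le hu.1
    have hD := norm_dirichletKernel_le (n / 4) hu₀ hu.2
    rw [one_add_cosPoly_jacksonWeight]
    calc ‖dirichletKernel (n / 4) (eTwoPi u)‖ ^ 4 / S ≤ (1 / (2 * u)) ^ 4 / S := by gcongr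
      _ = 3 * (1 / (48 * S)) / u ^ 4 := by field_simp; ring
  calc |sawtoothDefect n (jacksonWeight n) x| ≤ 1 / (48 * S) / x ^ 3 :=
        abs_sawtoothDefect_le_of_cosPoly_le (by positivity)
          (one_add_cosPoly_jacksonWeight_nonneg n) hdecay hx₀ hx
    _ ≤ 1 / (48 * ((n / 4 : ℕ) + 1) ^ 3 * x ^ 3) := by
        rw [div_div]
        gcongr
        exact pow_three_le_jacksonCoeff_zero _

end JacksonWeight

lemma exists_mul_mem_Ioc {v : ℕ → ℝ} {x : ℝ} (hx : 0 ≤ x) (hv : ∀ l, v (l + 1) ≤ 3 * v l)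
    (h₀ : v 0 * x ≤ 1 / 2) {L : ℕ} (hL : 1 / 2 < v L * x) :
    ∃ l < L, v l * x ∈ Set.Ioc (1 / 6) (1 / 2) := by
  induction L with
  | zero => exact absurd h₀ hL.not_ge
  | succ L ih =>
    by_cases hL' : 1 / 2 < v L * x
    · obtain ⟨l, hl, hlx⟩ := ih hL'
      exact ⟨l, hl.trans L.lt_succ_self, hlx⟩
    · refine ⟨L, L.lt_succ_self, ?_, not_lt.mp hL'⟩
      nlinarith [hv L]

def dyadicScale (l : ℕ) : ℕ := if l = 0 then 0 else 2 ^ (l - 1)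

lemma dyadicScale_succ (l : ℕ) : dyadicScale (l + 1) = 2 ^ l := by simp [dyadicScale]

lemma two_mul_dyadicScale_le {n l : ℕ} (hn : n ≠ 0) (hl : l ≤ Nat.log 2 n) :
    2 * dyadicScale l ≤ n := by
  cases l with
  | zero => simp [dyadicScale]
  | succ l =>
    rw [dyadicScale_succ, ← pow_succ']
    exact (Nat.pow_le_pow_right two_pos hl).trans (Nat.pow_log_le_self 2 hn)

lemma dyadicScale_succ_le (l : ℕ) :
    2 * (dyadicScale (l + 1) : ℝ) + 1 ≤ 3 * (2 * dyadicScale l + 1) := by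
  cases l with
  | zero => norm_num [dyadicScale]
  | succ l =>
    rw [dyadicScale_succ, dyadicScale_succ]
    push_cast
    linarith [pow_succ (2 : ℝ) l, pow_pos (two_pos : (0 : ℝ) < 2) l]

lemma succ_le_two_mul_dyadicScale_log (n : ℕ) :
    n + 1 ≤ 2 * (2 * dyadicScale (Nat.log 2 n) + 1) := by
  have hlt := Nat.lt_pow_succ_log_self one_lt_two n
  cases h : Nat.log 2 n with
  | zero => rw [h] at hlt; simp only [dyadicScale, if_pos]; omega
  | succ L => rw [h, pow_succ, pow_succ] at hlt; rw [dyadicScale_succ]; omega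

lemma sum_dyadicScale_le (L : ℕ) :
    ∑ l ∈ range (L + 1), (2 * dyadicScale l + 1) ≤ 2 ^ (L + 1) + L := by
  induction L with
  | zero => simp [dyadicScale]
  | succ L ih => rw [sum_range_succ, dyadicScale_succ, pow_succ 2 (L + 1)]; omega

lemma sum_dyadicScale_log_le {n : ℕ} (hn : n ≠ 0) :
    ∑ l ∈ range (Nat.log 2 n + 1), (2 * dyadicScale l + 1) ≤ 3 * n := by
  have h₁ := sum_dyadicScale_le (Nat.log 2 n)
  have h₂ : Nat.log 2 n < 2 ^ Nat.log 2 n := Nat.lt_two_pow_self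
  have h₃ := Nat.pow_log_le_self 2 hn
  rw [pow_succ] at h₁
  omega

-- `240 ≥ 24π²` is what `abs_sawtoothDefect_le_fejerMajorant_of_far` needs.
noncomputable def fejerMajorantCoeff (n : ℕ) (h : ℤ) : ℝ :=
  240 / ((n : ℝ) + 1) ^ 2 * ∑ l ∈ range (Nat.log 2 n + 1), fejerCoeff (dyadicScale l) h

noncomputable def fejerMajorant (n : ℕ) (x : ℝ) : ℝ :=
  240 / ((n : ℝ) + 1) ^ 2 *
    ∑ l ∈ range (Nat.log 2 n + 1), ‖dirichletKernel (dyadicScale l) (eTwoPi x)‖ ^ 2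

section Majorant

variable {n : ℕ}

lemma fejerMajorantCoeff_nonneg (h : ℤ) : 0 ≤ fejerMajorantCoeff n h :=
  mul_nonneg (by positivity) (sum_nonneg fun _ _ => fejerCoeff_nonneg _ h)

lemma fejerMajorantCoeff_le (hn : n ≠ 0) (h : ℤ) :
    fejerMajorantCoeff n h ≤ 720 / ((n : ℝ) + 1) := by
  have hsum : ∑ l ∈ range (Nat.log 2 n + 1), fejerCoeff (dyadicScale l) h ≤ 3 * n :=
    calc ∑ l ∈ range (Nat.log 2 n + 1), fejerCoeff (dyadicScale l) h
        ≤ ∑ l ∈ range (Nat.log 2 n + 1), (2 * (dyadicScale l : ℝ) + 1) :=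
          sum_le_sum fun l _ => fejerCoeff_le _ h
      _ ≤ 3 * n := by exact_mod_cast sum_dyadicScale_log_le hn
  calc fejerMajorantCoeff n h ≤ 240 / ((n : ℝ) + 1) ^ 2 * (3 * n) := by
        unfold fejerMajorantCoeff; gcongr
    _ ≤ 720 / ((n : ℝ) + 1) := by
        rw [div_mul_eq_mul_div, div_le_div_iff₀ (by positivity) (by positivity)]
        nlinarith [n.cast_nonneg (α := ℝ)]

lemma sum_fejerMajorantCoeff_mul_eTwoPi (hn : n ≠ 0) (t : ℝ) :
    ∑ h ∈ Icc (-(n : ℤ)) n, (fejerMajorantCoeff n h : ℂ) * eTwoPi (h * t) =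
      (fejerMajorant n t : ℝ) := by
  simp only [fejerMajorantCoeff, fejerMajorant, eTwoPi_int_mul, Complex.ofReal_mul,
    Complex.ofReal_sum, mul_assoc, ← mul_sum, sum_mul]
  rw [sum_comm]
  congr 1
  refine sum_congr rfl fun l hl => ?_
  rw [mem_range, Nat.lt_succ_iff] at hl
  exact sum_fejerCoeff_mul_zpow _ (two_mul_dyadicScale_le hn hl) (norm_eTwoPi t)

lemma norm_dirichletKernel_sq_le_fejerMajorant {l : ℕ} (hl : l ≤ Nat.log 2 n) (x : ℝ) :
    240 / ((n : ℝ) + 1) ^ 2 * ‖dirichletKernel (dyadicScale l) (eTwoPi x)‖ ^ 2 ≤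
      fejerMajorant n x := by
  unfold fejerMajorant
  gcongr
  exact single_le_sum (f := fun l => ‖dirichletKernel (dyadicScale l) (eTwoPi x)‖ ^ 2)
    (fun _ _ => by positivity) (mem_range.mpr (Nat.lt_succ_of_le hl))

lemma abs_sawtoothDefect_le_fejerMajorant_of_near {x : ℝ} (hx₀ : 0 ≤ x)
    (hx : (2 * dyadicScale (Nat.log 2 n) + 1) * x ≤ 1 / 2) :
    |sawtoothDefect n (jacksonWeight n) x| ≤ fejerMajorant n x := by
  set N : ℝ := n + 1
  set v : ℝ := 2 * dyadicScale (Nat.log 2 n) + 1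
  have hπ : π ^ 2 < 10 := by nlinarith [pi_pos, pi_lt_d2]
  have hv : 1 ≤ v := by linarith [(dyadicScale (Nat.log 2 n)).cast_nonneg (α := ℝ)]
  have hvN : 1 ≤ 2 * v / N := by
    rw [le_div_iff₀ (by positivity), one_mul]
    simp only [N, v]
    exact_mod_cast succ_le_two_mul_dyadicScale_log n
  calc |sawtoothDefect n (jacksonWeight n) x| ≤ 1 / 2 :=
        abs_sawtoothDefect_le_half (one_add_cosPoly_jacksonWeight_nonneg n) hx₀ (by nlinarith)
    _ ≤ 240 * (2 * v / N) ^ 2 / π ^ 2 := by rw [le_div_iff₀ (by positivity)]; nlinarith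
    _ = 240 / N ^ 2 * (2 / π * v) ^ 2 := by field_simp
    _ ≤ 240 / N ^ 2 * ‖dirichletKernel (dyadicScale (Nat.log 2 n)) (eTwoPi x)‖ ^ 2 := by
        gcongr; exact le_norm_dirichletKernel _ hx₀ hx
    _ ≤ fejerMajorant n x := norm_dirichletKernel_sq_le_fejerMajorant le_rfl x

lemma abs_sawtoothDefect_le_fejerMajorant_of_far {l : ℕ} (hl : l ≤ Nat.log 2 n) {x : ℝ}
    (hx : x ≤ 1 / 2) (hl₆ : 1 / 6 < (2 * dyadicScale l + 1) * x)
    (hl₂ : (2 * dyadicScale l + 1) * x ≤ 1 / 2) (hNx : 1 / 2 < ((n : ℝ) + 1) * x) :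
    |sawtoothDefect n (jacksonWeight n) x| ≤ fejerMajorant n x := by
  set N : ℝ := n + 1
  have hN : 0 < N := by positivity
  have hπ : π ^ 2 < 10 := by nlinarith [pi_pos, pi_lt_d2]
  have hx₀ : 0 < x := pos_of_mul_pos_right (hNx.trans' (by norm_num)) hN.le
  have hD : 1 / (9 * π ^ 2 * x ^ 2) ≤ ‖dirichletKernel (dyadicScale l) (eTwoPi x)‖ ^ 2 := by
    have h3 : 1 / (3 * π * x) ≤ 2 / π * (2 * dyadicScale l + 1) := by
      rw [div_le_iff₀ (by positivity)]
      field_simp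
      linarith
    calc 1 / (9 * π ^ 2 * x ^ 2) = (1 / (3 * π * x)) ^ 2 := by ring
      _ ≤ _ := by gcongr; exact h3.trans (le_norm_dirichletKernel _ hx₀.le hl₂)
  have hM : N ≤ 4 * ((n / 4 : ℕ) + 1) := by
    simp only [N]; exact_mod_cast (by omega : n + 1 ≤ 4 * (n / 4 + 1))
  calc |sawtoothDefect n (jacksonWeight n) x|
      ≤ 1 / (48 * ((n / 4 : ℕ) + 1) ^ 3 * x ^ 3) := abs_sawtoothDefect_jacksonWeight_le n hx₀ hx
    _ ≤ 64 / (48 * N ^ 3 * x ^ 3) := by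
        rw [div_le_div_iff₀ (by positivity) (by positivity)]
        nlinarith [pow_le_pow_left₀ hN.le hM 3, pow_pos hx₀ 3]
    _ ≤ 240 / N ^ 2 * (1 / (9 * π ^ 2 * x ^ 2)) := by
        rw [div_mul_div_comm, div_le_div_iff₀ (by positivity) (by positivity)]
        have key : 64 * 9 * π ^ 2 ≤ 240 * 48 * (N * x) := by nlinarith
        nlinarith [mul_le_mul_of_nonneg_right key (by positivity : 0 ≤ N ^ 2 * x ^ 2)]
    _ ≤ 240 / N ^ 2 * ‖dirichletKernel (dyadicScale l) (eTwoPi x)‖ ^ 2 := by gcongr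
    _ ≤ fejerMajorant n x := norm_dirichletKernel_sq_le_fejerMajorant hl x

lemma abs_sawtoothDefect_le_fejerMajorant (hn : n ≠ 0) {x : ℝ} (hx₀ : 0 ≤ x) (hx : x ≤ 1 / 2) :
    |sawtoothDefect n (jacksonWeight n) x| ≤ fejerMajorant n x := by
  set v : ℕ → ℝ := fun l => 2 * (dyadicScale l : ℝ) + 1
  rcases le_or_gt (v (Nat.log 2 n) * x) (1 / 2) with hnear | hfar
  · exact abs_sawtoothDefect_le_fejerMajorant_of_near hx₀ hnear
  · obtain ⟨l, hl, hl₆, hl₂⟩ :=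
      exists_mul_mem_Ioc hx₀ dyadicScale_succ_le (by simpa [v, dyadicScale] using hx) hfar
    refine abs_sawtoothDefect_le_fejerMajorant_of_far hl.le hx hl₆ hl₂ (hfar.trans_le ?_)
    have := two_mul_dyadicScale_le hn le_rfl
    gcongr
    simp only [v]
    exact_mod_cast (by omega : 2 * dyadicScale (Nat.log 2 n) + 1 ≤ n + 1)

lemma fejerMajorant_one_sub (x : ℝ) : fejerMajorant n (1 - x) = fejerMajorant n x := by
  simp only [fejerMajorant, eTwoPi_one_sub, dirichletKernel_inv]

lemma fejerMajorant_fract (t : ℝ) : fejerMajorant n (Int.fract t) = fejerMajorant n t := by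
  simp only [fejerMajorant, eTwoPi_fract]

lemma abs_sawtoothDefect_fract_le_fejerMajorant (hn : n ≠ 0) (t : ℝ) :
    |sawtoothDefect n (jacksonWeight n) (Int.fract t)| ≤ fejerMajorant n t := by
  rw [← fejerMajorant_fract]
  set x := Int.fract t
  rcases le_or_gt x (1 / 2) with hx | hx
  · exact abs_sawtoothDefect_le_fejerMajorant hn (Int.fract_nonneg t) hx
  · have hsymm := sawtoothDefect_one_sub n (jacksonWeight n) (1 - x)
    rw [sub_sub_cancel] at hsymm
    rw [hsymm, abs_neg, ← fejerMajorant_one_sub]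
    exact abs_sawtoothDefect_le_fejerMajorant hn (by linarith [Int.fract_lt_one t]) (by linarith)

end Majorant

/-- Vaaler's approximation: there is an absolute constant `C` such that for any `H ≥ 1`
there are coefficients `a_h` (`0 < |h| ≤ H`) and nonnegative reals `b_h` (`|h| ≤ H`) with
`|ψ(t) - ∑_{0<|h|≤H} a_h e(ht)| ≤ ∑_{|h|≤H} b_h e(ht)` for all `t`,
`|a_h| ≤ C/|h|` and `b_h ≤ C/H` (the right-hand side being real and nonnegative). -/
theorem vaaler_approximation :
    ∃ C > 0, ∀ H : ℝ, 1 ≤ H → ∃ (a : ℤ → ℂ) (b : ℤ → ℝ),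
      (∀ h : ℤ, h ∈ Finset.Icc (-⌊H⌋) ⌊H⌋ → 0 ≤ b h ∧ b h ≤ C / H) ∧
      (∀ h : ℤ, h ∈ (Finset.Icc (-⌊H⌋) ⌊H⌋).erase 0 → ‖a h‖ ≤ C / |(h : ℝ)|) ∧
      (∀ t : ℝ,
        (∑ h ∈ Finset.Icc (-⌊H⌋) ⌊H⌋, (b h : ℂ) * eTwoPi (h * t)).im = 0 ∧
        ‖(sawtooth t : ℂ) -
            ∑ h ∈ (Finset.Icc (-⌊H⌋) ⌊H⌋).erase 0, a h * eTwoPi (h * t)‖ ≤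
          (∑ h ∈ Finset.Icc (-⌊H⌋) ⌊H⌋, (b h : ℂ) * eTwoPi (h * t)).re) := by
  refine ⟨720, by norm_num, fun H hH => ?_⟩
  obtain ⟨n, hn⟩ := Int.eq_ofNat_of_zero_le (Int.floor_nonneg.mpr (zero_le_one.trans hH))
  have hn₀ : n ≠ 0 := by
    have : (1 : ℤ) ≤ ⌊H⌋ := Int.le_floor.mpr (by exact_mod_cast hH)
    omega
  have hHn : H ≤ n + 1 := by
    have := Int.lt_floor_add_one H
    rw [hn] at this
    exact_mod_cast this.le
  rw [hn]
  refine ⟨sawtoothCoeff (jacksonWeight n), fejerMajorantCoeff n,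
    fun h _ => ⟨fejerMajorantCoeff_nonneg h, ?_⟩, fun h hh => ?_, fun t => ?_⟩
  · exact (fejerMajorantCoeff_le hn₀ h).trans (by gcongr)
  · exact (norm_sawtoothCoeff_le (jacksonWeight_nonneg n) (jacksonWeight_le_one n)
      (mem_erase.mp hh).1).trans (by gcongr; norm_num)
  · rw [sum_fejerMajorantCoeff_mul_eTwoPi hn₀, sawtooth_sub_sum_eq (jacksonWeight_neg n),
      Complex.norm_real, Real.norm_eq_abs, Complex.ofReal_re, Complex.ofReal_im]
    exact ⟨rfl, abs_sawtoothDefect_fract_le_fejerMajorant hn₀ t⟩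
end
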